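/- Let H = (V,E) be a hypergraph with at least one hyperedge in which every hyperedge has cardinality at most d, and let V = C_1 ∪ … ∪ C_r be a partition of V into r disjoint parts with vol(V) > 0. For each i let p_i = |E(C_i)|/|E| be the fraction of hyperedges entirely contained in C_i; set α = 1 − Σ_{i=1}^{r} p_i and β = max_{1≤i≤r} p_i. For each ℓ ≥ 1 let a_ℓ = |E_ℓ|/|E|, and set δ = vol(V)/|E|. Then q*(H) ≥ 1 − α − a_1·(d/δ)·((d−2)·α + 1) − Σ_{ℓ≥2} a_ℓ·(d/δ)^ℓ·((r−1)·β^ℓ + ((d−1)·α + β)^ℓ). -/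
import Mathlib


attribute [local instance] Classical.propDecidable

/-- Degree of a vertex `v` in a hypergraph given by the multiset of hyperedges `E`. -/
def hdeg {V : Type*} [DecidableEq V] (E : Multiset (Multiset V)) (v : V) : ℕ :=
  (E.map fun e => e.count v).sum

/-- Volume of a set of vertices: the sum of the degrees of its elements. -/
def hvol {V : Type*} [DecidableEq V] (E : Multiset (Multiset V)) (A : Finset V) : ℕ :=
  ∑ v ∈ A, hdeg E v

/-- Modularity score of a partition `P` of the vertex set (Kamiński et al.):
`q_P(H) = Σ_{A ∈ P} ( |E(A)|/|E| − Σ_{ℓ ≥ 1} (|E_ℓ|/|E|)·(vol(A)/vol(V))^ℓ )`. -/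
noncomputable def hscore {V : Type*} [Fintype V] [DecidableEq V]
    (E : Multiset (Multiset V)) (P : Finpartition (Finset.univ : Finset V)) : ℝ :=
  ∑ A ∈ P.parts,
    ((Multiset.card (E.filter fun e => ∀ v ∈ e, v ∈ A) : ℝ) / (Multiset.card E : ℝ)
      - ∑' ℓ : ℕ,
          ((Multiset.card (E.filter fun e => Multiset.card e = ℓ + 1) : ℝ)
              / (Multiset.card E : ℝ))
            * ((hvol E A : ℝ) / (hvol E Finset.univ : ℝ)) ^ (ℓ + 1))

/-- Modularity of a hypergraph: the supremum of the modularity scores over all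
partitions of the vertex set. -/
noncomputable def hmodularity {V : Type*} [Fintype V] [DecidableEq V]
    (E : Multiset (Multiset V)) : ℝ :=
  ⨆ P : Finpartition (Finset.univ : Finset V), hscore E P

lemma aux_card_filter_eq_sum_map {M : Type*} (E : Multiset M) (p : M → Prop)
    [DecidablePred p] :
    (Multiset.card (E.filter p)) = (E.map fun e => if p e then 1 else 0).sum := by
  induction E using Multiset.induction_on with
  | empty => simp
  | cons a s ih =>
    by_cases h : p a <;> simp [Multiset.filter_cons, h, ih, add_comm]

lemma aux_sum_card_filter {ι M : Type*} (s : Finset ι) (E : Multiset M)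
    (P : ι → M → Prop) [∀ i, DecidablePred (P i)] [∀ e, DecidablePred fun i => P i e] :
    ∑ i ∈ s, Multiset.card (E.filter (P i)) =
      (E.map fun e => (s.filter fun i => P i e).card).sum := by
  induction E using Multiset.induction_on with
  | empty => simp
  | cons a E ih =>
    simp only [Multiset.filter_cons, Multiset.map_cons, Multiset.sum_cons, Multiset.card_add]
    rw [Finset.sum_add_distrib, ih, Finset.card_filter]
    congr 1
    refine Finset.sum_congr rfl fun i _ => ?_
    by_cases h : P i a <;> simp [h]

lemma aux_pow_increment {b c u : ℝ} (hb : 0 ≤ b) (hbc : b ≤ c) (hu : 0 ≤ u) :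
    ∀ ℓ : ℕ, (b + u) ^ ℓ - b ^ ℓ ≤ (c + u) ^ ℓ - c ^ ℓ := by
  intro ℓ
  induction ℓ with
  | zero => simp
  | succ n ih =>
    have h1 : 0 ≤ (b + u) ^ n - b ^ n := by
      nlinarith [pow_le_pow_left₀ hb (by linarith : b ≤ b + u) n]
    have h2 : b ^ n ≤ c ^ n := pow_le_pow_left₀ hb hbc n
    have h3 : b + u ≤ c + u := by linarith
    have h4 : (0:ℝ) ≤ b + u := by linarith
    have e1 : (c + u) ^ (n + 1) - c ^ (n + 1) = (c + u) * ((c + u) ^ n - c ^ n) + u * c ^ n := by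
      ring
    have e2 : (b + u) ^ (n + 1) - b ^ (n + 1) = (b + u) * ((b + u) ^ n - b ^ n) + u * b ^ n := by
      ring
    rw [e1, e2]
    have h5 := mul_le_mul h3 ih h1 (by linarith : (0:ℝ) ≤ c + u)
    nlinarith [mul_le_mul_of_nonneg_left h2 hu]

lemma aux_sum_pow_simplex {ι : Type*} (s : Finset ι) (p t : ι → ℝ) (β : ℝ)
    (hβ : 0 ≤ β) (hp0 : ∀ i, 0 ≤ p i) (hpβ : ∀ i, p i ≤ β) (ht : ∀ i, 0 ≤ t i) (ℓ : ℕ) :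
    ∑ i ∈ s, (p i + t i) ^ ℓ ≤ (∑ i ∈ s, p i ^ ℓ) + (β + ∑ i ∈ s, t i) ^ ℓ - β ^ ℓ := by
  induction s using Finset.cons_induction with
  | empty => simp
  | cons a s ha ih =>
    rw [Finset.sum_cons, Finset.sum_cons, Finset.sum_cons]
    have hT : 0 ≤ ∑ i ∈ s, t i := Finset.sum_nonneg fun i _ => ht i
    have h1 : (p a + t a) ^ ℓ - p a ^ ℓ ≤ (β + t a) ^ ℓ - β ^ ℓ :=
      aux_pow_increment (hp0 a) (hpβ a) (ht a) ℓ
    have h2 : (β + t a) ^ ℓ - β ^ ℓ ≤ (β + ∑ i ∈ s, t i + t a) ^ ℓ - (β + ∑ i ∈ s, t i) ^ ℓ :=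
      aux_pow_increment hβ (by linarith) (ht a) ℓ
    have h3 : (β + ∑ i ∈ s, t i + t a) = β + (t a + ∑ i ∈ s, t i) := by ring
    rw [h3] at h2
    linarith

lemma aux_sum_parts {V : Type*} [Fintype V] [DecidableEq V] {r : ℕ} (C : Fin r → Finset V)
    (hdisj : ∀ i j, i ≠ j → Disjoint (C i) (C j)) (hcover : ∀ v : V, ∃ i, v ∈ C i)
    {M : Type*} [AddCommMonoid M] (g : V → M) :
    ∑ i, ∑ v ∈ C i, g v = ∑ v, g v := by
  have hpd : ((Finset.univ : Finset (Fin r)) : Set (Fin r)).PairwiseDisjoint C :=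
    fun i _ j _ hij => hdisj i j hij
  rw [← Finset.sum_biUnion hpd]
  congr 1
  ext v
  simp only [Finset.mem_biUnion, Finset.mem_univ, true_iff, true_and]
  exact ⟨fun _ => trivial, fun _ => hcover v⟩

lemma aux_sum_count {V : Type*} [Fintype V] [DecidableEq V] (e : Multiset V) :
    ∑ v, e.count v = Multiset.card e := by
  rw [← Multiset.toFinset_sum_count_eq]
  exact (Finset.sum_subset (Finset.subset_univ _) fun v _ hv =>
    Multiset.count_eq_zero_of_notMem (by simpa using hv)).symm

section Edge

variable {V : Type*} [Fintype V] [DecidableEq V] {r : ℕ} {C : Fin r → Finset V}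

lemma aux_inside_le_one (hdisj : ∀ i j, i ≠ j → Disjoint (C i) (C j))
    (e : Multiset V) (he : e ≠ 0) :
    (Finset.univ.filter fun i => ∀ v ∈ e, v ∈ C i).card ≤ 1 := by
  rw [Finset.card_le_one]
  intro i hi j hj
  obtain ⟨v, hv⟩ := Multiset.exists_mem_of_ne_zero he
  simp only [Finset.mem_filter] at hi hj
  by_contra hij
  exact (Finset.disjoint_left.mp (hdisj i j hij)) (hi.2 v hv) (hj.2 v hv)

lemma aux_w_le (i : Fin r) (e : Multiset V) :
    ∑ v ∈ C i, e.count v ≤ Multiset.card e := by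
  rw [← aux_sum_count e]
  exact Finset.sum_le_sum_of_subset (Finset.subset_univ _)

lemma aux_KI (hdisj : ∀ i j, i ≠ j → Disjoint (C i) (C j))
    (hcover : ∀ v : V, ∃ i, v ∈ C i)
    (e : Multiset V) (he : e ≠ 0) (d : ℕ) (hed : Multiset.card e ≤ d) :
    (Finset.univ.filter fun i => (∃ v ∈ e, v ∈ C i) ∧ ¬ ∀ v ∈ e, v ∈ C i).card
      + d * (Finset.univ.filter fun i => ∀ v ∈ e, v ∈ C i).card ≤ d := by
  by_cases h : ∃ j, ∀ v ∈ e, v ∈ C j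
  · obtain ⟨j, hj⟩ := h
    have hK : (Finset.univ.filter fun i => (∃ v ∈ e, v ∈ C i) ∧ ¬ ∀ v ∈ e, v ∈ C i) = ∅ := by
      rw [Finset.filter_eq_empty_iff]
      rintro i - ⟨⟨v, hv, hvi⟩, hni⟩
      by_cases hij : i = j
      · exact hni (hij ▸ hj)
      · exact (Finset.disjoint_left.mp (hdisj i j hij)) hvi (hj v hv)
    rw [hK]
    simpa using Nat.mul_le_mul_left d (aux_inside_le_one hdisj e he)
  · have hI : (Finset.univ.filter fun i => ∀ v ∈ e, v ∈ C i) = ∅ :=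
      Finset.filter_eq_empty_iff.mpr fun i _ hi => h ⟨i, hi⟩
    rw [hI]
    simp only [Finset.card_empty, Nat.mul_zero, Nat.add_zero]
    have hsub : (Finset.univ.filter fun i => (∃ v ∈ e, v ∈ C i) ∧ ¬ ∀ v ∈ e, v ∈ C i)
        ⊆ Finset.univ.filter fun i => ∃ v ∈ e, v ∈ C i := by
      intro i hi
      simp only [Finset.mem_filter] at hi ⊢
      exact ⟨hi.1, hi.2.1⟩
    refine le_trans (Finset.card_le_card hsub) (le_trans ?_ hed)
    rw [← aux_sum_count e, ← aux_sum_parts C hdisj hcover (fun v => e.count v)]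
    rw [Finset.card_eq_sum_ones]
    refine le_trans (Finset.sum_le_sum fun i hi => ?_)
      (Finset.sum_le_sum_of_subset_of_nonneg (Finset.filter_subset _ _)
        (fun _ _ _ => Nat.zero_le _))
    simp only [Finset.mem_filter] at hi
    obtain ⟨v, hv, hvi⟩ := hi.2
    calc 1 ≤ e.count v := Multiset.one_le_count_iff_mem.mpr hv
      _ ≤ ∑ v ∈ C i, e.count v := Finset.single_le_sum (f := fun v => e.count v) (fun _ _ => Nat.zero_le _) hvi

lemma aux_w_edge (i : Fin r) (e : Multiset V) (he : e ≠ 0) (d : ℕ)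
    (hed : Multiset.card e ≤ d) :
    (∑ v ∈ C i, e.count v)
      + (if (∃ v ∈ e, v ∈ C i) ∧ ¬ ∀ v ∈ e, v ∈ C i then 1 else 0)
      ≤ d * ((if ∀ v ∈ e, v ∈ C i then 1 else 0)
          + (if (∃ v ∈ e, v ∈ C i) ∧ ¬ ∀ v ∈ e, v ∈ C i then 1 else 0)) := by
  by_cases hin : ∀ v ∈ e, v ∈ C i
  · rw [if_pos hin, if_neg (fun h => h.2 hin)]
    have := aux_w_le (C := C) i e
    omega
  · by_cases hm : ∃ v ∈ e, v ∈ C i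
    · rw [if_neg hin, if_pos ⟨hm, hin⟩]
      push_neg at hin
      obtain ⟨v0, hv0e, hv0n⟩ := hin
      have h1 : e.count v0 + ∑ v ∈ C i, e.count v ≤ Multiset.card e := by
        rw [← Finset.sum_insert (f := fun v => e.count v) hv0n, ← aux_sum_count e]
        exact Finset.sum_le_sum_of_subset (Finset.subset_univ _)
      have h2 : 1 ≤ e.count v0 := Multiset.one_le_count_iff_mem.mpr hv0e
      omega
    · rw [if_neg hin, if_neg (fun h => hm h.1)]
      have : ∑ v ∈ C i, e.count v = 0 := by
        refine Finset.sum_eq_zero fun v hv => ?_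
        by_contra hc
        exact hm ⟨v, Multiset.count_pos.mp (Nat.pos_of_ne_zero hc), hv⟩
      simp [this]

end Edge

lemma aux_hvol_eq {V : Type*} [DecidableEq V] (E : Multiset (Multiset V)) (A : Finset V) :
    hvol E A = (E.map fun e => ∑ v ∈ A, e.count v).sum := by
  unfold hvol hdeg
  induction E using Multiset.induction_on with
  | empty => simp
  | cons a E ih => simp [Multiset.map_cons, Multiset.sum_cons, Finset.sum_add_distrib, ih]

lemma aux_score_le_one {V : Type*} [Fintype V] [DecidableEq V]
    (E : Multiset (Multiset V)) (hE : E ≠ 0) (hne : ∀ e ∈ E, e ≠ 0)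
    (Q : Finpartition (Finset.univ : Finset V)) : hscore E Q ≤ 1 := by
  have hM : (0:ℝ) < (Multiset.card E : ℝ) := by
    exact_mod_cast Multiset.card_pos.mpr hE
  unfold hscore
  calc ∑ A ∈ Q.parts,
      ((Multiset.card (E.filter fun e => ∀ v ∈ e, v ∈ A) : ℝ) / (Multiset.card E : ℝ)
        - ∑' ℓ : ℕ, ((Multiset.card (E.filter fun e => Multiset.card e = ℓ + 1) : ℝ)
              / (Multiset.card E : ℝ))
            * ((hvol E A : ℝ) / (hvol E Finset.univ : ℝ)) ^ (ℓ + 1))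
      ≤ ∑ A ∈ Q.parts,
        (Multiset.card (E.filter fun e => ∀ v ∈ e, v ∈ A) : ℝ) / (Multiset.card E : ℝ) := by
        refine Finset.sum_le_sum fun A _ => ?_
        have h0 : (0:ℝ) ≤ ∑' ℓ : ℕ,
            ((Multiset.card (E.filter fun e => Multiset.card e = ℓ + 1) : ℝ)
              / (Multiset.card E : ℝ))
            * ((hvol E A : ℝ) / (hvol E Finset.univ : ℝ)) ^ (ℓ + 1) := by
          refine tsum_nonneg fun ℓ => ?_
          positivity
        linarith
    _ ≤ 1 := by
        rw [← Finset.sum_div, div_le_one hM]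
        have hnat : ∑ A ∈ Q.parts, Multiset.card (E.filter fun e => ∀ v ∈ e, v ∈ A)
            ≤ Multiset.card E := by
          rw [aux_sum_card_filter Q.parts E fun A e => ∀ v ∈ e, v ∈ A]
          calc (E.map fun e => (Q.parts.filter fun A => ∀ v ∈ e, v ∈ A).card).sum
              ≤ (E.map fun _ => 1).sum := by
                refine Multiset.sum_map_le_sum_map _ _ fun e heE => ?_
                rw [Finset.card_le_one]
                intro A hA B hB
                obtain ⟨v, hv⟩ := Multiset.exists_mem_of_ne_zero (hne e heE)
                simp only [Finset.mem_filter] at hA hB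
                by_contra hAB
                exact (Finset.disjoint_left.mp (Q.disjoint hA.1 hB.1 hAB))
                  (hA.2 v hv) (hB.2 v hv)
            _ = Multiset.card E := by simp [Multiset.map_const', Multiset.sum_replicate]
        exact_mod_cast hnat

set_option maxHeartbeats 2000000 in
/-- Let `H = (V, E)` be a hypergraph with at least one hyperedge, all
hyperedges of cardinality at most `d`, a partition of `V` into parts `C 1, …, C r` and
`vol(V) > 0`.  With `p i` the fraction of hyperedges inside `C i`,
`α = 1 − Σ_i p_i`, `β = max_i p_i`, `a ℓ` the fraction of hyperedges of cardinality `ℓ`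
and `δ = vol(V)/|E|`, one has
`q*(H) ≥ 1 − α − a_1·(d/δ)·((d−2)·α + 1)
        − Σ_{ℓ≥2} a_ℓ·(d/δ)^ℓ·((r−1)·β^ℓ + ((d−1)·α + β)^ℓ)`. -/
theorem hmodularity_lower_bound_alpha_beta {V : Type*} [Fintype V] [DecidableEq V]
    (E : Multiset (Multiset V)) (d r : ℕ)
    (hE : E ≠ 0) (hne : ∀ e ∈ E, e ≠ 0) (hcard : ∀ e ∈ E, Multiset.card e ≤ d)
    (C : Fin r → Finset V)
    (hdisj : ∀ i j, i ≠ j → Disjoint (C i) (C j))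
    (hcover : ∀ v : V, ∃ i, v ∈ C i)
    (hvolpos : 0 < hvol E Finset.univ)
    (p : Fin r → ℝ)
    (hp : ∀ i, p i =
      (Multiset.card (E.filter fun e => ∀ v ∈ e, v ∈ C i) : ℝ) / (Multiset.card E : ℝ))
    (α β : ℝ) (hα : α = 1 - ∑ i, p i) (hβ : IsGreatest (Set.range p) β)
    (a : ℕ → ℝ)
    (ha : ∀ ℓ : ℕ, a ℓ =
      (Multiset.card (E.filter fun e => Multiset.card e = ℓ) : ℝ) / (Multiset.card E : ℝ))
    (δ : ℝ) (hδ : δ = (hvol E Finset.univ : ℝ) / (Multiset.card E : ℝ)) :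
    hmodularity E ≥ 1 - α - a 1 * ((d : ℝ) / δ) * (((d : ℝ) - 2) * α + 1)
      - ∑' ℓ : ℕ, a (ℓ + 2) * ((d : ℝ) / δ) ^ (ℓ + 2)
          * (((r : ℝ) - 1) * β ^ (ℓ + 2) + (((d : ℝ) - 1) * α + β) ^ (ℓ + 2)) := by
  have hM : (0:ℝ) < (Multiset.card E : ℝ) := by exact_mod_cast Multiset.card_pos.mpr hE
  have hVV : (0:ℝ) < (hvol E Finset.univ : ℝ) := by exact_mod_cast hvolpos
  have hδpos : 0 < δ := by rw [hδ]; exact div_pos hVV hM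
  have hd1 : 1 ≤ d := by
    obtain ⟨e, he⟩ := Multiset.exists_mem_of_ne_zero hE
    have h1 : 0 < Multiset.card e := Multiset.card_pos.mpr (hne e he)
    have h2 := hcard e he
    omega
  have hD1 : (1:ℝ) ≤ (d:ℝ) := by exact_mod_cast hd1
  have hD0 : (0:ℝ) < (d:ℝ) := by linarith
  obtain ⟨i0, hi0⟩ := hβ.1
  have hr1 : (1:ℝ) ≤ (r:ℝ) := by exact_mod_cast i0.pos
  have hp0 : ∀ i, 0 ≤ p i := fun i => by rw [hp i]; positivity
  have hpβ : ∀ i, p i ≤ β := fun i => hβ.2 ⟨i, rfl⟩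
  have hβ0 : 0 ≤ β := hi0 ▸ hp0 i0
  -- ℕ counting facts
  have hsumn : ∑ i, Multiset.card (E.filter fun e => ∀ v ∈ e, v ∈ C i) ≤ Multiset.card E := by
    rw [aux_sum_card_filter Finset.univ E fun i e => ∀ v ∈ e, v ∈ C i]
    calc (E.map fun e => (Finset.univ.filter fun i => ∀ v ∈ e, v ∈ C i).card).sum
        ≤ (E.map fun _ => 1).sum :=
          Multiset.sum_map_le_sum_map _ _ fun e heE => aux_inside_le_one hdisj e (hne e heE)
      _ = Multiset.card E := by simp [Multiset.map_const', Multiset.sum_replicate]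
  have hKI : (∑ i, Multiset.card (E.filter fun e => (∃ v ∈ e, v ∈ C i) ∧ ¬ ∀ v ∈ e, v ∈ C i))
      + d * ∑ i, Multiset.card (E.filter fun e => ∀ v ∈ e, v ∈ C i)
      ≤ d * Multiset.card E := by
    rw [aux_sum_card_filter Finset.univ E fun i e => (∃ v ∈ e, v ∈ C i) ∧ ¬ ∀ v ∈ e, v ∈ C i,
      aux_sum_card_filter Finset.univ E fun i e => ∀ v ∈ e, v ∈ C i,
      ← Multiset.sum_map_mul_left, ← Multiset.sum_map_add]
    calc (E.map fun e => (Finset.univ.filter fun i => (∃ v ∈ e, v ∈ C i) ∧ ¬ ∀ v ∈ e, v ∈ C i).card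
            + d * (Finset.univ.filter fun i => ∀ v ∈ e, v ∈ C i).card).sum
        ≤ (E.map fun _ => d).sum :=
          Multiset.sum_map_le_sum_map _ _ fun e heE =>
            aux_KI hdisj hcover e (hne e heE) d (hcard e heE)
      _ = d * Multiset.card E := by simp [Multiset.map_const', Multiset.sum_replicate, mul_comm]
  have hvolC : ∀ i, hvol E (C i)
      + Multiset.card (E.filter fun e => (∃ v ∈ e, v ∈ C i) ∧ ¬ ∀ v ∈ e, v ∈ C i)
      ≤ d * (Multiset.card (E.filter fun e => ∀ v ∈ e, v ∈ C i)
          + Multiset.card (E.filter fun e => (∃ v ∈ e, v ∈ C i) ∧ ¬ ∀ v ∈ e, v ∈ C i)) := by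
    intro i
    rw [aux_hvol_eq, aux_card_filter_eq_sum_map E fun e => (∃ v ∈ e, v ∈ C i) ∧ ¬ ∀ v ∈ e, v ∈ C i,
      aux_card_filter_eq_sum_map E fun e => ∀ v ∈ e, v ∈ C i,
      ← Multiset.sum_map_add, ← Multiset.sum_map_add, ← Multiset.sum_map_mul_left]
    exact Multiset.sum_map_le_sum_map _ _ fun e heE =>
      aux_w_edge i e (hne e heE) d (hcard e heE)
  have hvolsum : ∑ i, (hvol E (C i) : ℝ) = (hvol E Finset.univ : ℝ) := by
    have h := aux_sum_parts C hdisj hcover (hdeg E)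
    have h2 : ∑ i, hvol E (C i) = hvol E Finset.univ := h
    exact_mod_cast congrArg (fun k : ℕ => (k : ℝ)) h2
  -- real-side quantities
  set t : Fin r → ℝ := fun i =>
    (((d:ℝ) - 1) * (Multiset.card (E.filter fun e =>
        (∃ v ∈ e, v ∈ C i) ∧ ¬ ∀ v ∈ e, v ∈ C i) : ℝ)) / ((d:ℝ) * (Multiset.card E : ℝ))
    with htdef
  have ht0 : ∀ i, 0 ≤ t i := by
    intro i
    rw [htdef]
    exact div_nonneg (mul_nonneg (by linarith) (Nat.cast_nonneg _)) (by positivity)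
  have hx0 : ∀ i, 0 ≤ (hvol E (C i) : ℝ) / (hvol E Finset.univ : ℝ) := fun i => by positivity
  have hxle : ∀ i, (hvol E (C i) : ℝ) / (hvol E Finset.univ : ℝ)
      ≤ ((d:ℝ)/δ) * (p i + t i) := by
    intro i
    have hnum : (hvol E (C i) : ℝ)
        ≤ (d:ℝ) * (Multiset.card (E.filter fun e => ∀ v ∈ e, v ∈ C i) : ℝ)
          + ((d:ℝ) - 1) * (Multiset.card (E.filter fun e =>
              (∃ v ∈ e, v ∈ C i) ∧ ¬ ∀ v ∈ e, v ∈ C i) : ℝ) := by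
      have h := hvolC i
      have h' : (hvol E (C i) : ℝ)
          + (Multiset.card (E.filter fun e => (∃ v ∈ e, v ∈ C i) ∧ ¬ ∀ v ∈ e, v ∈ C i) : ℝ)
          ≤ (d:ℝ) * ((Multiset.card (E.filter fun e => ∀ v ∈ e, v ∈ C i) : ℝ)
            + (Multiset.card (E.filter fun e => (∃ v ∈ e, v ∈ C i) ∧ ¬ ∀ v ∈ e, v ∈ C i) : ℝ)) := by
        exact_mod_cast h
      nlinarith
    have heq : ((d:ℝ)/δ) * (p i + t i)
        = ((d:ℝ) * (Multiset.card (E.filter fun e => ∀ v ∈ e, v ∈ C i) : ℝ)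
          + ((d:ℝ) - 1) * (Multiset.card (E.filter fun e =>
              (∃ v ∈ e, v ∈ C i) ∧ ¬ ∀ v ∈ e, v ∈ C i) : ℝ)) / (hvol E Finset.univ : ℝ) := by
      rw [hδ, hp i, htdef]
      field_simp
    rw [heq]
    gcongr
  have hsump : ∑ i, p i = 1 - α := by rw [hα]; ring
  have hα0 : 0 ≤ α := by
    rw [hα]
    have h1 : ∑ i, p i = (∑ i, (Multiset.card (E.filter fun e => ∀ v ∈ e, v ∈ C i) : ℝ))
        / (Multiset.card E : ℝ) := by
      rw [Finset.sum_div]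
      exact Finset.sum_congr rfl fun i _ => hp i
    have h2 : (∑ i, (Multiset.card (E.filter fun e => ∀ v ∈ e, v ∈ C i) : ℝ))
        ≤ (Multiset.card E : ℝ) := by exact_mod_cast hsumn
    have h3 : ∑ i, p i ≤ 1 := by
      rw [h1, div_le_one hM]
      exact h2
    linarith
  have hsumt : ∑ i, t i ≤ ((d:ℝ) - 1) * α := by
    have h1 : (∑ i, (Multiset.card (E.filter fun e =>
          (∃ v ∈ e, v ∈ C i) ∧ ¬ ∀ v ∈ e, v ∈ C i) : ℝ))
        + (d:ℝ) * ∑ i, (Multiset.card (E.filter fun e => ∀ v ∈ e, v ∈ C i) : ℝ)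
        ≤ (d:ℝ) * (Multiset.card E : ℝ) := by exact_mod_cast hKI
    have h2 : ∑ i, (Multiset.card (E.filter fun e => ∀ v ∈ e, v ∈ C i) : ℝ)
        = (Multiset.card E : ℝ) * (1 - α) := by
      have h3 : ∑ i, p i = (∑ i, (Multiset.card (E.filter fun e => ∀ v ∈ e, v ∈ C i) : ℝ))
          / (Multiset.card E : ℝ) := by
        rw [Finset.sum_div]
        exact Finset.sum_congr rfl fun i _ => hp i
      rw [hsump] at h3
      field_simp at h3
      linarith
    have hmmle : ∑ i, (Multiset.card (E.filter fun e =>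
        (∃ v ∈ e, v ∈ C i) ∧ ¬ ∀ v ∈ e, v ∈ C i) : ℝ)
        ≤ (d:ℝ) * (Multiset.card E : ℝ) * α := by nlinarith
    have h4 : ∑ i, t i = (((d:ℝ) - 1) * ∑ i, (Multiset.card (E.filter fun e =>
        (∃ v ∈ e, v ∈ C i) ∧ ¬ ∀ v ∈ e, v ∈ C i) : ℝ)) / ((d:ℝ) * (Multiset.card E : ℝ)) := by
      rw [htdef, Finset.mul_sum, Finset.sum_div]
    rw [h4, div_le_iff₀ (by positivity)]
    nlinarith [mul_le_mul_of_nonneg_left hmmle (show (0:ℝ) ≤ (d:ℝ) - 1 by linarith)]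
  -- key inequalities
  have key1 : ∑ i, (hvol E (C i) : ℝ) / (hvol E Finset.univ : ℝ)
      ≤ ((d:ℝ)/δ) * (((d:ℝ) - 2) * α + 1) := by
    calc ∑ i, (hvol E (C i) : ℝ) / (hvol E Finset.univ : ℝ)
        ≤ ∑ i, ((d:ℝ)/δ) * (p i + t i) := Finset.sum_le_sum fun i _ => hxle i
      _ = ((d:ℝ)/δ) * (∑ i, p i + ∑ i, t i) := by
          rw [← Finset.mul_sum, Finset.sum_add_distrib]
      _ ≤ ((d:ℝ)/δ) * ((1 - α) + ((d:ℝ) - 1) * α) := by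
          have hdd : (0:ℝ) ≤ (d:ℝ)/δ := by positivity
          apply mul_le_mul_of_nonneg_left _ hdd
          rw [hsump]
          linarith
      _ = ((d:ℝ)/δ) * (((d:ℝ) - 2) * α + 1) := by ring
  have keyk : ∀ k : ℕ, ∑ i, ((hvol E (C i) : ℝ) / (hvol E Finset.univ : ℝ)) ^ k
      ≤ ((d:ℝ)/δ)^k * (((r:ℝ) - 1) * β^k + (((d:ℝ) - 1) * α + β)^k) := by
    intro k
    have hdd : (0:ℝ) ≤ ((d:ℝ)/δ)^k := by positivity
    calc ∑ i, ((hvol E (C i) : ℝ) / (hvol E Finset.univ : ℝ)) ^ k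
        ≤ ∑ i, (((d:ℝ)/δ) * (p i + t i))^k :=
          Finset.sum_le_sum fun i _ => pow_le_pow_left₀ (hx0 i) (hxle i) k
      _ = ((d:ℝ)/δ)^k * ∑ i, (p i + t i)^k := by
          rw [Finset.mul_sum]
          exact Finset.sum_congr rfl fun i _ => mul_pow _ _ k
      _ ≤ ((d:ℝ)/δ)^k * ((∑ i, p i ^ k) + (β + ∑ i, t i)^k - β^k) :=
          mul_le_mul_of_nonneg_left
            (aux_sum_pow_simplex Finset.univ p t β hβ0 hp0 hpβ ht0 k) hdd
      _ ≤ ((d:ℝ)/δ)^k * ((r:ℝ) * β^k + (β + ((d:ℝ) - 1) * α)^k - β^k) := by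
          apply mul_le_mul_of_nonneg_left _ hdd
          have e1 : ∑ i, p i ^ k ≤ (r:ℝ) * β^k := by
            calc ∑ i, p i ^ k ≤ ∑ _i : Fin r, β^k :=
                Finset.sum_le_sum fun i _ => pow_le_pow_left₀ (hp0 i) (hpβ i) k
              _ = (r:ℝ) * β^k := by
                  rw [Finset.sum_const, Finset.card_univ, Fintype.card_fin, nsmul_eq_mul]
          have e2 : (β + ∑ i, t i)^k ≤ (β + ((d:ℝ) - 1) * α)^k := by
            apply pow_le_pow_left₀ (add_nonneg hβ0 (Finset.sum_nonneg fun i _ => ht0 i))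
            linarith
          linarith
      _ = ((d:ℝ)/δ)^k * (((r:ℝ) - 1) * β^k + (((d:ℝ) - 1) * α + β)^k) := by ring
  -- facts about a
  have ha0 : ∀ ℓ, 0 ≤ a ℓ := fun ℓ => by rw [ha ℓ]; positivity
  have hagt : ∀ ℓ, d < ℓ → a ℓ = 0 := by
    intro ℓ hℓ
    rw [ha ℓ]
    have h0 : (E.filter fun e => Multiset.card e = ℓ) = 0 :=
      Multiset.filter_eq_nil.mpr fun e heE hcd => by have := hcard e heE; omega
    rw [h0]
    simp
  -- tsum conversions
  have htsumA : ∀ A : Finset V,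
      (∑' ℓ : ℕ, ((Multiset.card (E.filter fun e => Multiset.card e = ℓ + 1) : ℝ)
          / (Multiset.card E : ℝ)) * ((hvol E A : ℝ) / (hvol E Finset.univ : ℝ)) ^ (ℓ + 1))
      = ∑ ℓ ∈ Finset.range d, a (ℓ + 1)
          * ((hvol E A : ℝ) / (hvol E Finset.univ : ℝ)) ^ (ℓ + 1) := by
    intro A
    have hz : ∀ ℓ ∉ Finset.range d,
        ((Multiset.card (E.filter fun e => Multiset.card e = ℓ + 1) : ℝ)
          / (Multiset.card E : ℝ)) * ((hvol E A : ℝ) / (hvol E Finset.univ : ℝ)) ^ (ℓ + 1) = 0 := by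
      intro ℓ hℓ
      have h1 : a (ℓ+1) = 0 := hagt (ℓ+1) (by simp only [Finset.mem_range, not_lt] at hℓ; omega)
      rw [← ha (ℓ+1), h1, zero_mul]
    rw [tsum_eq_sum hz]
    exact Finset.sum_congr rfl fun ℓ _ => by rw [← ha (ℓ+1)]
  have hgoaltsum : (∑' ℓ : ℕ, a (ℓ + 2) * ((d : ℝ) / δ) ^ (ℓ + 2)
          * (((r : ℝ) - 1) * β ^ (ℓ + 2) + (((d : ℝ) - 1) * α + β) ^ (ℓ + 2)))
      = ∑ ℓ ∈ Finset.range d, a (ℓ + 2) * ((d : ℝ) / δ) ^ (ℓ + 2)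
          * (((r : ℝ) - 1) * β ^ (ℓ + 2) + (((d : ℝ) - 1) * α + β) ^ (ℓ + 2)) := by
    refine tsum_eq_sum fun ℓ hℓ => ?_
    rw [hagt (ℓ+2) (by simp only [Finset.mem_range, not_lt] at hℓ; omega), zero_mul, zero_mul]
  -- the partition induced by C
  have hpd0 : ((Finset.univ.image C : Finset (Finset V)) : Set (Finset V)).PairwiseDisjoint id := by
    intro A hA B hB hAB
    simp only [Finset.coe_image, Set.mem_image] at hA hB
    obtain ⟨i, -, rfl⟩ := hA
    obtain ⟨j, -, rfl⟩ := hB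
    exact hdisj i j fun h => hAB (congrArg C h)
  have hind : (Finset.univ.image C).SupIndep id :=
    Finset.supIndep_iff_pairwiseDisjoint.mpr hpd0
  have hsup : (Finset.univ.image C).sup id = (Finset.univ : Finset V) := by
    refine le_antisymm le_top ?_
    intro v _
    obtain ⟨i, hi⟩ := hcover v
    exact Finset.mem_sup.mpr ⟨C i, Finset.mem_image_of_mem C (Finset.mem_univ i), hi⟩
  set P : Finpartition (Finset.univ : Finset V) := Finpartition.ofErase _ hind hsup with hPdef
  have hinj : ∀ i ∈ Finset.univ.filter (fun i => C i ≠ ∅),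
      ∀ j ∈ Finset.univ.filter (fun i => C i ≠ ∅), C i = C j → i = j := by
    intro i hi j _ hij
    by_contra hne'
    simp only [Finset.mem_filter] at hi
    obtain ⟨v, hv⟩ := Finset.nonempty_iff_ne_empty.mpr hi.2
    exact (Finset.disjoint_left.mp (hdisj i j hne')) hv (hij ▸ hv)
  have himg : (Finset.univ.image C).erase ∅
      = (Finset.univ.filter fun i => C i ≠ ∅).image C := by
    ext A
    simp only [Finset.mem_erase, Finset.mem_image, Finset.mem_filter, Finset.mem_univ, true_and]
    constructor
    · rintro ⟨hA, i, rfl⟩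
      exact ⟨i, hA, rfl⟩
    · rintro ⟨i, hi, rfl⟩
      exact ⟨hi, i, rfl⟩
  have hsum_parts : ∀ F : Finset V → ℝ, F ∅ = 0 → ∑ A ∈ P.parts, F A = ∑ i, F (C i) := by
    intro F hF0
    rw [show P.parts = (Finset.univ.image C).erase ∅ from rfl, himg, Finset.sum_image hinj]
    exact Finset.sum_subset (Finset.filter_subset _ _) fun i _ hi => by
      rw [show C i = ∅ from by simpa using hi, hF0]
  have hF0 : (Multiset.card (E.filter fun e => ∀ v ∈ e, v ∈ (∅ : Finset V)) : ℝ)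
        / (Multiset.card E : ℝ)
      - ∑' ℓ : ℕ, ((Multiset.card (E.filter fun e => Multiset.card e = ℓ + 1) : ℝ)
          / (Multiset.card E : ℝ))
        * ((hvol E (∅ : Finset V) : ℝ) / (hvol E Finset.univ : ℝ)) ^ (ℓ + 1) = 0 := by
    have hfil : (E.filter fun e => ∀ v ∈ e, v ∈ (∅ : Finset V)) = 0 :=
      Multiset.filter_eq_nil.mpr fun e heE h =>
        (hne e heE) (Multiset.eq_zero_of_forall_notMem fun v hv => by simpa using h v hv)
    have hv0 : hvol E (∅ : Finset V) = 0 := by simp [hvol]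
    rw [hfil, hv0]
    simp
  have hscoreP : hscore E P = ∑ i,
      ((Multiset.card (E.filter fun e => ∀ v ∈ e, v ∈ C i) : ℝ) / (Multiset.card E : ℝ)
        - ∑' ℓ : ℕ, ((Multiset.card (E.filter fun e => Multiset.card e = ℓ + 1) : ℝ)
            / (Multiset.card E : ℝ))
          * ((hvol E (C i) : ℝ) / (hvol E Finset.univ : ℝ)) ^ (ℓ + 1)) :=
    hsum_parts (fun A =>
      (Multiset.card (E.filter fun e => ∀ v ∈ e, v ∈ A) : ℝ) / (Multiset.card E : ℝ)
        - ∑' ℓ : ℕ, ((Multiset.card (E.filter fun e => Multiset.card e = ℓ + 1) : ℝ)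
            / (Multiset.card E : ℝ))
          * ((hvol E A : ℝ) / (hvol E Finset.univ : ℝ)) ^ (ℓ + 1)) hF0
  have hscoreP2 : hscore E P = (1 - α) - ∑ ℓ ∈ Finset.range d, a (ℓ+1)
      * ∑ i, ((hvol E (C i) : ℝ) / (hvol E Finset.univ : ℝ)) ^ (ℓ + 1) := by
    rw [hscoreP, Finset.sum_sub_distrib]
    congr 1
    · rw [← hsump]
      exact Finset.sum_congr rfl fun i _ => (hp i).symm
    · calc ∑ i, (∑' ℓ : ℕ, ((Multiset.card (E.filter fun e => Multiset.card e = ℓ + 1) : ℝ)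
              / (Multiset.card E : ℝ))
            * ((hvol E (C i) : ℝ) / (hvol E Finset.univ : ℝ)) ^ (ℓ + 1))
          = ∑ i, ∑ ℓ ∈ Finset.range d, a (ℓ + 1)
              * ((hvol E (C i) : ℝ) / (hvol E Finset.univ : ℝ)) ^ (ℓ + 1) :=
            Finset.sum_congr rfl fun i _ => htsumA (C i)
        _ = ∑ ℓ ∈ Finset.range d, ∑ i, a (ℓ + 1)
              * ((hvol E (C i) : ℝ) / (hvol E Finset.univ : ℝ)) ^ (ℓ + 1) := Finset.sum_comm
        _ = ∑ ℓ ∈ Finset.range d, a (ℓ+1)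
              * ∑ i, ((hvol E (C i) : ℝ) / (hvol E Finset.univ : ℝ)) ^ (ℓ + 1) :=
            Finset.sum_congr rfl fun ℓ _ => (Finset.mul_sum _ _ _).symm
  -- final assembly
  have hsplit : ∑ ℓ ∈ Finset.range d, a (ℓ+1)
        * ∑ i, ((hvol E (C i) : ℝ) / (hvol E Finset.univ : ℝ)) ^ (ℓ + 1)
      = (∑ ℓ ∈ Finset.range (d-1), a (ℓ+2)
          * ∑ i, ((hvol E (C i) : ℝ) / (hvol E Finset.univ : ℝ)) ^ (ℓ + 2))
        + a 1 * ∑ i, ((hvol E (C i) : ℝ) / (hvol E Finset.univ : ℝ)) ^ 1 := by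
    conv_lhs => rw [show d = (d-1)+1 from by omega]
    exact Finset.sum_range_succ' _ (d-1)
  have hb1 : a 1 * ∑ i, ((hvol E (C i) : ℝ) / (hvol E Finset.univ : ℝ)) ^ 1
      ≤ a 1 * ((d:ℝ)/δ) * (((d:ℝ) - 2) * α + 1) := by
    have hx1 : ∑ i, ((hvol E (C i) : ℝ) / (hvol E Finset.univ : ℝ)) ^ 1
        = ∑ i, (hvol E (C i) : ℝ) / (hvol E Finset.univ : ℝ) := by
      exact Finset.sum_congr rfl fun i _ => pow_one _
    rw [hx1, mul_assoc]
    exact mul_le_mul_of_nonneg_left key1 (ha0 1)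
  have hb2 : ∑ ℓ ∈ Finset.range (d-1), a (ℓ+2)
        * ∑ i, ((hvol E (C i) : ℝ) / (hvol E Finset.univ : ℝ)) ^ (ℓ + 2)
      ≤ ∑ ℓ ∈ Finset.range d, a (ℓ + 2) * ((d : ℝ) / δ) ^ (ℓ + 2)
          * (((r : ℝ) - 1) * β ^ (ℓ + 2) + (((d : ℝ) - 1) * α + β) ^ (ℓ + 2)) := by
    refine le_trans (Finset.sum_le_sum fun ℓ _ => ?_)
      (Finset.sum_le_sum_of_subset_of_nonneg
        (Finset.range_subset_range.mpr (by omega)) fun ℓ _ _ => ?_)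
    · rw [mul_assoc]
      exact mul_le_mul_of_nonneg_left (keyk (ℓ+2)) (ha0 (ℓ+2))
    · have h1 : (0:ℝ) ≤ ((r:ℝ) - 1) * β ^ (ℓ+2) :=
        mul_nonneg (by linarith) (pow_nonneg hβ0 _)
      have h2 : (0:ℝ) ≤ (((d:ℝ) - 1) * α + β) ^ (ℓ+2) :=
        pow_nonneg (by nlinarith) _
      have h3 : (0:ℝ) ≤ a (ℓ+2) * ((d:ℝ)/δ) ^ (ℓ+2) := mul_nonneg (ha0 _) (by positivity)
      exact mul_nonneg h3 (by linarith)
  have hfinal : 1 - α - a 1 * ((d : ℝ) / δ) * (((d : ℝ) - 2) * α + 1)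
      - (∑ ℓ ∈ Finset.range d, a (ℓ + 2) * ((d : ℝ) / δ) ^ (ℓ + 2)
          * (((r : ℝ) - 1) * β ^ (ℓ + 2) + (((d : ℝ) - 1) * α + β) ^ (ℓ + 2)))
      ≤ hscore E P := by
    rw [hscoreP2]
    linarith [hsplit, hb1, hb2]
  have hbdd : BddAbove (Set.range (hscore E (V := V))) := by
    refine ⟨1, ?_⟩
    rintro y ⟨Q, rfl⟩
    exact aux_score_le_one E hE hne Q
  rw [ge_iff_le, hgoaltsum]
  exact le_trans hfinal (le_ciSup hbdd P)
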